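/- arXiv:2106.12660 — 2 statements merged into one kernel-verified Lean document; each statement's English description precedes it below -/
import Mathlib

section
/- If A and B are measurable subsets of ℝ with λ(A) > 0 and λ(B) > 0, then there exists a rational number r such that λ((A + r) ∩ B) > 0. -/
/-!
Pick Lebesgue density points `a` of `A` and `b` of `B`, and a radius `δ` at which `A` and `B`
fill more than `3/4` of the closed balls of radius `δ` about them. A rational `r` with
`|a + r - b| ≤ δ/4` moves the first ball inside `Z = closedBall b (5δ/4)`; then `A + r` and `B`
occupy more than `3δ` of the length `5δ/2` of `Z`, so they overlap in positive measure.
-/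

open MeasureTheory Metric Filter Set
open scoped ENNReal Topology

theorem measure_inter_pos_of_lt_add {α : Type*} [MeasurableSpace α] {μ : Measure α}
    {S T Z : Set α} (hT : NullMeasurableSet T μ)
    (h : μ Z < μ (S ∩ Z) + μ (T ∩ Z)) : 0 < μ (S ∩ T) := by
  refine pos_iff_ne_zero.2 fun hST => h.not_ge ?_
  calc μ (S ∩ Z) + μ (T ∩ Z) ≤ μ (Z \ T) + μ (Z ∩ T) := by
        gcongr ?_ + ?_
        · calc μ (S ∩ Z) ≤ μ (S ∩ Z ∩ T) + μ ((S ∩ Z) \ T) := measure_le_inter_add_sdiff μ _ _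
            _ ≤ μ (S ∩ T) + μ (Z \ T) := by gcongr <;> intro x <;> simp +contextual
            _ = μ (Z \ T) := by rw [hST, zero_add]
        · rw [inter_comm]
    _ = μ Z := by rw [add_comm, measure_inter_add_sdiff₀ Z hT]

theorem exists_eventually_lt_measure_inter_closedBall {X : Type*} [MetricSpace X]
    [MeasurableSpace X] [BorelSpace X] [SecondCountableTopology X] [ProperSpace X]
    [HasBesicovitchCovering X] (μ : Measure X) [IsFiniteMeasureOnCompacts μ]
    [μ.IsOpenPosMeasure] {S : Set X} (hS : μ S ≠ 0) {c : ℝ≥0∞} (hc : c < 1) :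
    ∃ x, ∀ᶠ δ in 𝓝[>] 0, c * μ (closedBall x δ) < μ (S ∩ closedBall x δ) := by
  have : (ae (μ.restrict S)).NeBot := ae_neBot.2 (by simpa using hS)
  obtain ⟨x, hx⟩ := (Besicovitch.ae_tendsto_measure_inter_div μ S).exists
  refine ⟨x, ?_⟩
  filter_upwards [hx.eventually (eventually_gt_nhds hc), self_mem_nhdsWithin] with δ hδ hδpos
  exact (ENNReal.lt_div_iff_mul_lt (.inl (measure_closedBall_pos μ x hδpos).ne')
    (.inl measure_closedBall_lt_top.ne)).1 hδ

theorem measure_image_add_right_inter_closedBall {G : Type*} [SeminormedAddCommGroup G]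
    [MeasurableSpace G] [MeasurableAdd G] (μ : Measure G) [μ.IsAddRightInvariant]
    (A : Set G) (a r : G) (δ : ℝ) :
    μ ((· + r) '' A ∩ closedBall (a + r) δ) = μ (A ∩ closedBall a δ) := by
  rw [image_add_right, ← sub_neg_eq_add, ← preimage_add_right_closedBall, ← preimage_inter,
    measure_preimage_add_right]

theorem exists_rat_translate_inter_pos_general (A B : Set ℝ)
    (hB : MeasurableSet B)
    (hApos : 0 < volume A) (hBpos : 0 < volume B) :
    ∃ r : ℚ, 0 < volume (((fun a : ℝ => a + (r : ℝ)) '' A) ∩ B) := by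
  have hc : ENNReal.ofReal (3 / 4) < 1 := by norm_num
  obtain ⟨a, ha⟩ := exists_eventually_lt_measure_inter_closedBall volume hApos.ne' hc
  obtain ⟨b, hb⟩ := exists_eventually_lt_measure_inter_closedBall volume hBpos.ne' hc
  obtain ⟨δ, ⟨hAδ, hBδ⟩, hδ : 0 < δ⟩ := ((ha.and hb).and self_mem_nhdsWithin).exists
  obtain ⟨r, hr⟩ : ∃ r : ℚ, dist (a + r) b ≤ δ / 4 := by
    obtain ⟨r, hr₁, hr₂⟩ := exists_rat_btwn (show b - a - δ / 4 < b - a + δ / 4 by linarith)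
    exact ⟨r, abs_le.2 ⟨by linarith, by linarith⟩⟩
  refine ⟨r, measure_inter_pos_of_lt_add (Z := closedBall b (5 / 4 * δ)) hB.nullMeasurableSet ?_⟩
  calc volume (closedBall b (5 / 4 * δ))
      < ENNReal.ofReal (3 / 4) * volume (closedBall (a + r) δ)
        + ENNReal.ofReal (3 / 4) * volume (closedBall b δ) := by
        simp only [Real.volume_closedBall, ← ENNReal.ofReal_mul (by norm_num : (0 : ℝ) ≤ 3 / 4)]
        rw [← ENNReal.ofReal_add (by positivity) (by positivity)]
        exact (ENNReal.ofReal_lt_ofReal_iff (by positivity)).2 (by linarith)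
    _ ≤ volume ((· + (r : ℝ)) '' A ∩ closedBall (a + r) δ) + volume (B ∩ closedBall b δ) := by
        rw [measure_image_add_right_inter_closedBall, Real.volume_closedBall,
          ← Real.volume_closedBall a]
        exact add_le_add hAδ.le hBδ.le
    _ ≤ volume ((· + (r : ℝ)) '' A ∩ closedBall b (5 / 4 * δ))
        + volume (B ∩ closedBall b (5 / 4 * δ)) := by
        gcongr
        · exact closedBall_subset_closedBall' (by linarith)
        · linarith

/-- If `A, B ⊆ ℝ` are measurable with positive measure, then some rational
translate of `A` meets `B` in a set of positive measure. -/
theorem exists_rat_translate_inter_pos (A B : Set ℝ)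
    (hA : MeasurableSet A) (hB : MeasurableSet B)
    (hApos : 0 < volume A) (hBpos : 0 < volume B) :
    ∃ r : ℚ, 0 < volume (((fun a : ℝ => a + (r : ℝ)) '' A) ∩ B) :=
  exists_rat_translate_inter_pos_general A B hB hApos hBpos
end

section
/- Define f on the set D of reals in (0,1) with a unique binary expansion by swapping adjacent binary digits: if x has binary digits (x₀, x₁, x₂, …) then f(x) has digits (y₀, y₁, …) with y_{2n} = x_{2n+1} and y_{2n+1} = x_{2n}. Then for every monotone function g (from a subset of ℝ to ℝ), if the domain of f ∩ g is Lebesgue measurable, it has Lebesgue density at most 1 − 2⁻⁶ at every point, hence is a null set. -/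
/-!
A real in `D` has a unique binary expansion, so its digits are not eventually `1`. Inside a
dyadic interval `σ` of even level, the swap sends the quarters `σ01` and `σ10` to reals in
reversed order and keeps `σ00` below `σ11`. Hence a monotone `g` agreeing with `f` on `E` misses
a whole open quarter `σ01` or `σ10`, and an antitone one misses `σ00` or `σ11`. Every interval
`(x - ε, x + ε)` around `x ∈ E` with `ε ≤ 1` contains such a quarter of length at least `ε / 16`,
so the density of `E` at `x` is at most `31 / 32`; by the Lebesgue density theorem `E` is null.
-/

open MeasureTheory Filter

/-- The real number with binary digit sequence `a` (digit `i` in position `i+1`). -/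
noncomputable def bval (a : ℕ → Bool) : ℝ :=
  ∑' i : ℕ, (if a i then ((2 : ℝ) ^ (i + 1))⁻¹ else 0)

/-- Swap adjacent binary digits: positions `2n` and `2n+1` are exchanged. -/
def bswap (a : ℕ → Bool) : ℕ → Bool :=
  fun n => if n % 2 = 0 then a (n + 1) else a (n - 1)

/-- The graph of the digit-swapping function `f`, defined on reals in `(0,1)`
with a unique binary expansion. -/
def swapGraph : Set (ℝ × ℝ) :=
  {p | ∃ a : ℕ → Bool, bval a = p.1 ∧ (∀ b : ℕ → Bool, bval b = p.1 → b = a) ∧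
    p.1 ∈ Set.Ioo (0 : ℝ) 1 ∧ p.2 = bval (bswap a)}

open Set Topology

noncomputable def bvalTrunc (a : ℕ → Bool) (n : ℕ) : ℝ :=
  ∑ i ∈ Finset.range n, if a i then ((2 : ℝ) ^ (i + 1))⁻¹ else 0

def dyadicIoo (a : ℕ → Bool) (n : ℕ) : Set ℝ :=
  Ioo (bvalTrunc a n) (bvalTrunc a n + ((2 : ℝ) ^ n)⁻¹)

def boolDigits (a : ℕ → Bool) : ℕ → Fin 2 := fun i => if a i then 1 else 0

lemma ofDigitsTerm_boolDigits (a : ℕ → Bool) (i : ℕ) :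
    Real.ofDigitsTerm (boolDigits a) i = if a i then ((2 : ℝ) ^ (i + 1))⁻¹ else 0 := by
  unfold Real.ofDigitsTerm boolDigits
  split <;> simp

lemma bval_eq_ofDigits (a : ℕ → Bool) : bval a = Real.ofDigits (boolDigits a) := by
  simp only [bval, Real.ofDigits, ofDigitsTerm_boolDigits]

lemma summable_bval (a : ℕ → Bool) :
    Summable fun i => if a i then ((2 : ℝ) ^ (i + 1))⁻¹ else 0 :=
  Real.summable_ofDigitsTerm.congr (ofDigitsTerm_boolDigits a)

lemma bval_nonneg (a : ℕ → Bool) : 0 ≤ bval a :=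
  bval_eq_ofDigits a ▸ Real.ofDigits_nonneg _

lemma bval_le_one (a : ℕ → Bool) : bval a ≤ 1 :=
  bval_eq_ofDigits a ▸ Real.ofDigits_le_one _

lemma bval_const_false : bval (fun _ => false) = 0 := by
  simp [bval]

lemma bval_const_true : bval (fun _ => true) = 1 :=
  bval_eq_ofDigits _ ▸ Real.ofDigits_const_last_eq_one 1

lemma bval_lt_one {a : ℕ → Bool} {i : ℕ} (hi : a i = false) : bval a < 1 := by
  rw [← bval_const_true]
  refine Summable.tsum_lt_tsum (i := i) (fun j => ?_) (by simp [hi]) (summable_bval a)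
    (summable_bval _)
  split <;> simp

lemma bval_eq_bvalTrunc_add (a : ℕ → Bool) (n : ℕ) :
    bval a = bvalTrunc a n + ((2 : ℝ) ^ n)⁻¹ * bval (fun i => a (i + n)) := by
  rw [bval_eq_ofDigits, bval_eq_ofDigits, Real.ofDigits_eq_sum_add_ofDigits _ n]
  simp only [ofDigitsTerm_boolDigits, bvalTrunc, Nat.cast_ofNat]
  rfl

lemma bvalTrunc_succ (a : ℕ → Bool) (n : ℕ) :
    bvalTrunc a (n + 1) = bvalTrunc a n + if a n then ((2 : ℝ) ^ (n + 1))⁻¹ else 0 :=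
  Finset.sum_range_succ _ _

lemma bvalTrunc_congr {a b : ℕ → Bool} {n : ℕ} (h : ∀ i < n, a i = b i) :
    bvalTrunc a n = bvalTrunc b n :=
  Finset.sum_congr rfl fun i hi => by rw [h i (Finset.mem_range.1 hi)]

lemma dyadicIoo_congr {a b : ℕ → Bool} {n : ℕ} (h : ∀ i < n, a i = b i) :
    dyadicIoo a n = dyadicIoo b n := by
  rw [dyadicIoo, dyadicIoo, bvalTrunc_congr h]

lemma bval_mem_Icc (a : ℕ → Bool) (n : ℕ) :
    bval a ∈ Icc (bvalTrunc a n) (bvalTrunc a n + ((2 : ℝ) ^ n)⁻¹) := by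
  have hp : (0 : ℝ) < ((2 : ℝ) ^ n)⁻¹ := by positivity
  have h0 := mul_nonneg hp.le (bval_nonneg fun i => a (i + n))
  have h1 := mul_le_of_le_one_right hp.le (bval_le_one fun i => a (i + n))
  rw [bval_eq_bvalTrunc_add a n]
  constructor <;> linarith

lemma two_pow_inv_eq_two_mul (n : ℕ) : ((2 : ℝ) ^ n)⁻¹ = 2 * ((2 : ℝ) ^ (n + 1))⁻¹ := by
  rw [pow_succ]; field_simp

lemma dyadicIoo_antitone (a : ℕ → Bool) : Antitone (dyadicIoo a) := by
  refine antitone_nat_of_succ_le fun n => ?_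
  have h := two_pow_inv_eq_two_mul n
  have hp : (0 : ℝ) < ((2 : ℝ) ^ (n + 1))⁻¹ := by positivity
  unfold dyadicIoo
  rw [bvalTrunc_succ]
  apply Ioo_subset_Ioo <;> split <;> linarith

lemma bval_lt_bval {b c : ℕ → Bool} {m k : ℕ} (hbc : ∀ i < m, b i = c i) (hb : b m = false)
    (hc : c m = true) (hmk : m < k) (hbk : b k = false) : bval b < bval c := by
  have hp : (0 : ℝ) < ((2 : ℝ) ^ (m + 1))⁻¹ := by positivity
  have htail : bval (fun i => b (i + (m + 1))) < 1 :=
    bval_lt_one (i := k - (m + 1)) (by rwa [Nat.sub_add_cancel hmk])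
  have h1 := mul_lt_of_lt_one_right hp htail
  have h2 := mul_nonneg hp.le (bval_nonneg fun i => c (i + (m + 1)))
  rw [bval_eq_bvalTrunc_add b (m + 1), bval_eq_bvalTrunc_add c (m + 1), bvalTrunc_succ,
    bvalTrunc_succ, bvalTrunc_congr hbc, hb, hc]
  simp only [Bool.false_eq_true, if_false, if_true]
  linarith

/-- `0.σ0111… = 0.σ1000…`. -/
lemma bval_eq_of_carry {b c : ℕ → Bool} {j : ℕ} (hbc : ∀ i < j, b i = c i) (hb : b j = false)
    (hc : c j = true) (hb' : ∀ i, j < i → b i = true) (hc' : ∀ i, j < i → c i = false) :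
    bval b = bval c := by
  have htb : (fun i => b (i + (j + 1))) = fun _ => true := funext fun i => hb' _ (by omega)
  have htc : (fun i => c (i + (j + 1))) = fun _ => false := funext fun i => hc' _ (by omega)
  rw [bval_eq_bvalTrunc_add b (j + 1), bval_eq_bvalTrunc_add c (j + 1), bvalTrunc_succ,
    bvalTrunc_succ, bvalTrunc_congr hbc, hb, hc, htb, htc, bval_const_true, bval_const_false]
  simp

lemma exists_gt_false_of_unique {a : ℕ → Bool} (hu : ∀ b, bval b = bval a → b = a)
    (ha : bval a < 1) (n : ℕ) : ∃ i, n < i ∧ a i = false := by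
  suffices h : ∀ n, ¬ ∀ i, n ≤ i → a i = true by
    by_contra! h'
    exact h (n + 1) fun i hi => Bool.not_eq_false _ |>.mp (h' i hi)
  intro n
  induction n with
  | zero =>
    intro h
    have : a = fun _ => true := funext fun i => h i i.zero_le
    exact ha.ne (this ▸ bval_const_true)
  | succ j ih =>
    intro h
    have hj : a j = false := by
      by_contra hj
      refine ih fun i hi => ?_
      rcases hi.eq_or_lt with rfl | hi
      · simpa using hj
      · exact h i hi
    let c : ℕ → Bool := fun i => if i < j then a i else decide (i = j)
    have hc : c = a := hu c <| (bval_eq_of_carry (fun i hi => by simp [c, hi]) hj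
      (by simp [c]) h fun i hi => by simp [c, hi.ne', not_lt.2 hi.le]).symm
    simpa [c, hj] using congrFun hc j

lemma eq_of_bval_mem_dyadicIoo {a b : ℕ → Bool} {n : ℕ} (h : bval b ∈ dyadicIoo a n) :
    ∀ i < n, b i = a i := by
  induction n with
  | zero => intro i hi; omega
  | succ n ih =>
    have hpre := ih (dyadicIoo_antitone a n.le_succ h)
    have hp : (0 : ℝ) < ((2 : ℝ) ^ (n + 1))⁻¹ := by positivity
    have h0 := mul_nonneg hp.le (bval_nonneg fun i => b (i + (n + 1)))
    have h1 := mul_le_of_le_one_right hp.le (bval_le_one fun i => b (i + (n + 1)))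
    have hn : b n = a n := by
      obtain ⟨hlo, hhi⟩ := h
      rw [bval_eq_bvalTrunc_add b (n + 1), bvalTrunc_succ, bvalTrunc_succ,
        bvalTrunc_congr hpre] at hlo hhi
      cases hb : b n <;> cases ha : a n <;>
        simp only [hb, ha, Bool.false_eq_true, if_true, if_false] at hlo hhi <;>
        first | rfl | linarith
    intro i hi
    rcases (Nat.lt_succ_iff.1 hi).lt_or_eq with hi | rfl
    exacts [hpre i hi, hn]

lemma bswap_of_even (a : ℕ → Bool) {i : ℕ} (hi : Even i) : bswap a i = a (i + 1) := by
  simp [bswap, Nat.even_iff.1 hi]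

lemma bswap_of_odd (a : ℕ → Bool) {i : ℕ} (hi : Odd i) : bswap a i = a (i - 1) := by
  simp [bswap, Nat.odd_iff.1 hi]

lemma bswap_eq_bswap_of_even {b c : ℕ → Bool} {m : ℕ} (hm : Even m)
    (h : ∀ i < m, b i = c i) : ∀ i < m, bswap b i = bswap c i := by
  intro i hi
  rcases Nat.even_or_odd i with he | ho
  · rw [bswap_of_even b he, bswap_of_even c he]
    obtain ⟨k, rfl⟩ := hm
    obtain ⟨l, rfl⟩ := he
    exact h _ (by omega)
  · rw [bswap_of_odd b ho, bswap_of_odd c ho]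
    exact h _ (by omega)

lemma exists_gt_bswap_false {a : ℕ → Bool} (h : ∀ n, ∃ i, n < i ∧ a i = false) (n : ℕ) :
    ∃ i, n < i ∧ bswap a i = false := by
  obtain ⟨i, hi, hai⟩ := h (n + 1)
  rcases Nat.even_or_odd i with he | ho
  · exact ⟨i + 1, by omega, by rw [bswap_of_odd a he.add_one, Nat.add_sub_cancel, hai]⟩
  · have he : Even (i - 1) := by
      obtain ⟨k, rfl⟩ := ho
      exact ⟨k, by omega⟩
    exact ⟨i - 1, by omega, by rw [bswap_of_even a he, Nat.sub_add_cancel (by omega), hai]⟩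

lemma bval_bswap_lt_bval_bswap {b c : ℕ → Bool} {m : ℕ} (hm : Even m)
    (hbc : ∀ i < m, b i = c i) (hb : b (m + 1) = false) (hc : c (m + 1) = true)
    (hfalse : ∀ n, ∃ i, n < i ∧ b i = false) : bval (bswap b) < bval (bswap c) := by
  obtain ⟨k, hk, hbk⟩ := exists_gt_bswap_false hfalse m
  exact bval_lt_bval (bswap_eq_bswap_of_even hm hbc) (by rwa [bswap_of_even b hm])
    (by rwa [bswap_of_even c hm]) hk hbk

lemma exists_digits_of_mem_swapGraph {x y : ℝ} (h : (x, y) ∈ swapGraph) :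
    ∃ a, bval a = x ∧ y = bval (bswap a) ∧ ∀ n, ∃ i, n < i ∧ a i = false := by
  obtain ⟨a, rfl, hu, hx, rfl⟩ := h
  exact ⟨a, rfl, rfl, exists_gt_false_of_unique hu hx.2⟩

/-- `dyadicIoo (replaceDigits a m d₁ d₂) (m + 2)` is the quarter `σd₁d₂` of the dyadic interval
`σ = dyadicIoo a m`. -/
def replaceDigits (a : ℕ → Bool) (m : ℕ) (d₁ d₂ : Bool) : ℕ → Bool :=
  Function.update (Function.update a m d₁) (m + 1) d₂

lemma replaceDigits_of_lt (a : ℕ → Bool) {m i : ℕ} (d₁ d₂ : Bool) (hi : i < m) :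
    replaceDigits a m d₁ d₂ i = a i := by
  rw [replaceDigits, Function.update_of_ne (by omega), Function.update_of_ne hi.ne]

lemma digits_of_mem_quarter {a b : ℕ → Bool} {m : ℕ} {d₁ d₂ : Bool}
    (h : bval b ∈ dyadicIoo (replaceDigits a m d₁ d₂) (m + 2)) :
    (∀ i < m, b i = a i) ∧ b m = d₁ ∧ b (m + 1) = d₂ := by
  have h' := eq_of_bval_mem_dyadicIoo h
  refine ⟨fun i hi => ?_, ?_, ?_⟩
  · rw [h' i (by omega), replaceDigits_of_lt a d₁ d₂ hi]
  · rw [h' m (by omega)]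
    simp [replaceDigits]
  · rw [h' (m + 1) (by omega)]
    simp [replaceDigits]

lemma exists_digits_of_not_disjoint {g : ℝ → ℝ} {T : Set ℝ}
    (hT : ∀ x ∈ T, (x, g x) ∈ swapGraph) {a : ℕ → Bool} {m : ℕ} {d₁ d₂ : Bool}
    (h : ¬Disjoint T (dyadicIoo (replaceDigits a m d₁ d₂) (m + 2))) :
    ∃ b, bval b ∈ T ∧ g (bval b) = bval (bswap b) ∧ (∀ n, ∃ i, n < i ∧ b i = false) ∧
      (∀ i < m, b i = a i) ∧ b m = d₁ ∧ b (m + 1) = d₂ := by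
  obtain ⟨x, hxT, hxQ⟩ := Set.not_disjoint_iff.1 h
  obtain ⟨b, rfl, hgb, hfalse⟩ := exists_digits_of_mem_swapGraph (hT x hxT)
  exact ⟨b, hxT, hgb, hfalse, digits_of_mem_quarter hxQ⟩

lemma exists_disjoint_quarter {g : ℝ → ℝ} {T : Set ℝ} (hg : MonotoneOn g T ∨ AntitoneOn g T)
    (hT : ∀ x ∈ T, (x, g x) ∈ swapGraph) {m : ℕ} (hm : Even m) (a : ℕ → Bool) :
    ∃ d₁ d₂, Disjoint T (dyadicIoo (replaceDigits a m d₁ d₂) (m + 2)) := by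
  by_contra! hmeet
  rcases hg with hmono | hanti
  · obtain ⟨b, hbT, hgb, hbf, hba, hbm, hbm'⟩ :=
      exists_digits_of_not_disjoint hT (hmeet false true)
    obtain ⟨c, hcT, hgc, hcf, hca, hcm, hcm'⟩ :=
      exists_digits_of_not_disjoint hT (hmeet true false)
    have hbc : ∀ i < m, b i = c i := fun i hi => (hba i hi).trans (hca i hi).symm
    obtain ⟨k, hk, hbk⟩ := hbf m
    have hle := hmono hbT hcT (bval_lt_bval hbc hbm hcm hk hbk).le
    rw [hgb, hgc] at hle
    exact hle.not_gt (bval_bswap_lt_bval_bswap hm (fun i hi => (hbc i hi).symm) hcm' hbm' hcf)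
  · obtain ⟨b, hbT, hgb, hbf, hba, hbm, hbm'⟩ :=
      exists_digits_of_not_disjoint hT (hmeet false false)
    obtain ⟨c, hcT, hgc, -, hca, hcm, hcm'⟩ :=
      exists_digits_of_not_disjoint hT (hmeet true true)
    have hbc : ∀ i < m, b i = c i := fun i hi => (hba i hi).trans (hca i hi).symm
    obtain ⟨k, hk, hbk⟩ := hbf m
    have hle := hanti hbT hcT (bval_lt_bval hbc hbm hcm hk hbk).le
    rw [hgb, hgc] at hle
    exact hle.not_gt (bval_bswap_lt_bval_bswap hm hbc hbm' hcm' hbf)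

lemma exists_even_scale {ε : ℝ} (hε : 0 < ε) (hε1 : ε ≤ 1) :
    ∃ m, Even m ∧ ((2 : ℝ) ^ m)⁻¹ < ε ∧ ε ≤ 4 * ((2 : ℝ) ^ m)⁻¹ := by
  obtain ⟨n, hn, hn'⟩ := exists_nat_pow_near (one_le_inv₀ hε |>.2 hε1) (by norm_num : (1 : ℝ) < 4)
  have h4 : (2 : ℝ) ^ (2 * (n + 1)) = 4 ^ (n + 1) := by rw [pow_mul]; norm_num
  refine ⟨2 * (n + 1), even_two_mul _, h4 ▸ inv_lt_of_inv_lt₀ hε hn', ?_⟩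
  calc ε ≤ (4 ^ n)⁻¹ := (le_inv_comm₀ (by positivity) hε).1 hn
    _ = 4 * ((2 : ℝ) ^ (2 * (n + 1)))⁻¹ := by rw [h4, pow_succ]; field_simp

lemma volume_dyadicIoo (a : ℕ → Bool) (n : ℕ) :
    volume (dyadicIoo a n) = ENNReal.ofReal ((2 : ℝ) ^ n)⁻¹ := by
  rw [dyadicIoo, Real.volume_Ioo, add_sub_cancel_left]

lemma volume_inter_Ioo_le {g : ℝ → ℝ} {T : Set ℝ} (hg : MonotoneOn g T ∨ AntitoneOn g T)
    (hT : ∀ x ∈ T, (x, g x) ∈ swapGraph) {x ε : ℝ} (hx : x ∈ T) (hε : 0 < ε) (hε1 : ε ≤ 1) :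
    volume (T ∩ Ioo (x - ε) (x + ε)) ≤
      ENNReal.ofReal (31 / 32) * volume (Ioo (x - ε) (x + ε)) := by
  obtain ⟨a, rfl, -, -⟩ := exists_digits_of_mem_swapGraph (hT x hx)
  obtain ⟨m, hm, hlt, hle⟩ := exists_even_scale hε hε1
  obtain ⟨d₁, d₂, hdisj⟩ := exists_disjoint_quarter hg hT hm a
  set Q := dyadicIoo (replaceDigits a m d₁ d₂) (m + 2)
  have hQ : Q ⊆ Ioo (bval a - ε) (bval a + ε) := by
    intro y hy
    have hy' := dyadicIoo_antitone _ (m.le_add_right 2) hy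
    rw [dyadicIoo_congr fun i hi => replaceDigits_of_lt a d₁ d₂ hi] at hy'
    have hx' := bval_mem_Icc a m
    constructor <;> linarith [hy'.1, hy'.2, hx'.1, hx'.2]
  have hq : ((2 : ℝ) ^ (m + 2))⁻¹ = ((2 : ℝ) ^ m)⁻¹ / 4 := by
    rw [pow_add]; norm_num; ring
  calc volume (T ∩ Ioo (bval a - ε) (bval a + ε))
      ≤ volume (Ioo (bval a - ε) (bval a + ε) \ Q) :=
        measure_mono fun y hy => ⟨hy.2, hdisj.notMem_of_mem_left hy.1⟩
    _ = ENNReal.ofReal (2 * ε) - ENNReal.ofReal ((2 : ℝ) ^ (m + 2))⁻¹ := by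
        rw [measure_sdiff hQ measurableSet_Ioo.nullMeasurableSet
          (by rw [volume_dyadicIoo]; exact ENNReal.ofReal_ne_top), Real.volume_Ioo,
          volume_dyadicIoo]
        ring_nf
    _ ≤ ENNReal.ofReal (31 / 32 * (2 * ε)) := by
        rw [← ENNReal.ofReal_sub _ (by positivity)]
        exact ENNReal.ofReal_le_ofReal (by rw [hq]; linarith)
    _ = ENNReal.ofReal (31 / 32) * volume (Ioo (bval a - ε) (bval a + ε)) := by
        rw [ENNReal.ofReal_mul (by norm_num), Real.volume_Ioo]
        ring_nf

theorem volume_eq_zero_of_limsup_density_le {E : Set ℝ} {c : ENNReal} (hc : c < 1)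
    (h : ∀ x ∈ E, limsup (fun ε : ℝ => volume (E ∩ Ioo (x - ε) (x + ε)) /
      volume (Ioo (x - ε) (x + ε))) (𝓝[>] 0) ≤ c) :
    volume E = 0 := by
  by_contra hE
  obtain ⟨x, hx, hlim⟩ := Measure.exists_mem_of_measure_ne_zero_of_ae hE
    (Besicovitch.ae_tendsto_measure_inter_div volume E)
  have hball : ∀ r, Metric.closedBall x r =ᵐ[volume] Ioo (x - r) (x + r) := fun r => by
    rw [Real.closedBall_eq_Icc]
    exact Ioo_ae_eq_Icc.symm
  simp only [fun r => measure_congr (hball r),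
    fun r => measure_congr ((ae_eq_refl E).inter (hball r))] at hlim
  exact (h x hx).not_gt (hlim.limsup_eq ▸ hc)

lemma ofReal_31_div_32_le_one_sub : ENNReal.ofReal (31 / 32) ≤ 1 - 2⁻¹ ^ 6 := by
  have h : (1 - 2⁻¹ ^ 6 : ENNReal) = ENNReal.ofReal (1 - 2⁻¹ ^ 6) := by
    rw [ENNReal.ofReal_sub _ (by positivity), ENNReal.ofReal_one, ENNReal.ofReal_pow (by norm_num),
      ENNReal.ofReal_inv_of_pos (by norm_num), ENNReal.ofReal_ofNat]
  exact h ▸ ENNReal.ofReal_le_ofReal (by norm_num)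

theorem swap_agreement_null_general (g : ℝ → ℝ) (S : Set ℝ)
    (hg : MonotoneOn g S ∨ AntitoneOn g S)
    (E : Set ℝ) (hE : E = {x : ℝ | x ∈ S ∧ (x, g x) ∈ swapGraph}) :
    (∀ x ∈ E, limsup
        (fun ε : ℝ => volume (E ∩ Set.Ioo (x - ε) (x + ε)) /
          volume (Set.Ioo (x - ε) (x + ε)))
        (nhdsWithin 0 (Set.Ioi (0 : ℝ))) ≤ 1 - 2⁻¹ ^ 6) ∧
      volume E = 0 := by
  have hES : E ⊆ S := hE ▸ fun x hx => hx.1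
  have hEf : ∀ x ∈ E, (x, g x) ∈ swapGraph := hE ▸ fun x hx => hx.2
  have hgE : MonotoneOn g E ∨ AntitoneOn g E := hg.imp (·.mono hES) (·.mono hES)
  have hdens : ∀ x ∈ E, limsup (fun ε : ℝ => volume (E ∩ Ioo (x - ε) (x + ε)) /
      volume (Ioo (x - ε) (x + ε))) (𝓝[>] 0) ≤ 1 - 2⁻¹ ^ 6 := fun x hx =>
    limsup_le_of_le (by isBoundedDefault) <| by
      filter_upwards [Ioc_mem_nhdsGT zero_lt_one] with ε hε
      exact (ENNReal.div_le_of_le_mul (volume_inter_Ioo_le hgE hEf hx hε.1 hε.2)).trans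
        ofReal_31_div_32_le_one_sub
  exact ⟨hdens, volume_eq_zero_of_limsup_density_le
    (ENNReal.sub_lt_self ENNReal.one_ne_top one_ne_zero (by simp)) hdens⟩

/-- For any monotone (or antitone) function `g`, the set on which `g` agrees
with the digit-swapping function has Lebesgue density at most `1 - 2⁻⁶` at
every one of its points (if measurable), hence is a null set. -/
theorem swap_agreement_null (g : ℝ → ℝ) (S : Set ℝ)
    (hg : MonotoneOn g S ∨ AntitoneOn g S)
    (E : Set ℝ) (hE : E = {x : ℝ | x ∈ S ∧ (x, g x) ∈ swapGraph})
    (hEm : MeasurableSet E) :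
    (∀ x ∈ E, limsup
        (fun ε : ℝ => volume (E ∩ Set.Ioo (x - ε) (x + ε)) /
          volume (Set.Ioo (x - ε) (x + ε)))
        (nhdsWithin 0 (Set.Ioi (0 : ℝ))) ≤ 1 - 2⁻¹ ^ 6) ∧
      volume E = 0 :=
  swap_agreement_null_general g S hg E hE
end
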